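/- Let g₁₁, g₂₂, g₁₂, μ > 0 with g₁₂ > √(g₁₁ g₂₂), and set a = √μ / g₁₁^{1/4}, b = √μ / g₂₂^{1/4}. Every bounded entire C² solution (u₁, u₂) : ℝⁿ → ℝ² of the system Δu₁ = g₁₁(u₁² − a²)u₁ + g₁₂ u₁ u₂², Δu₂ = g₂₂(u₂² − b²)u₂ + g₁₂ u₁² u₂ satisfies u₁(x)²/a² + u₂(x)²/b² ≤ 1 for all x ∈ ℝⁿ. -/

import Mathlib

/-!
Put `s₁ = √g₁₁`, `s₂ = √g₂₂` and `W = u₁²/a² + u₂²/b²`. At an interior maximum of `W` the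
Laplacian of `W` is nonpositive, and since `Δ(u²) ≥ 2uΔu` the equations turn this into
`(s₁p + s₂q)(p + q - 1) ≤ 0` for `p = u₁²/a²`, `q = u₂²/b²`, once the cross terms are bounded
using `g₁₂ ≥ s₁s₂`; hence `W = p + q ≤ 1` there. As `W` need not attain its supremum, one
maximizes `W - ε‖x‖²` instead, which yields `W ≤ 1 + O(ε)` everywhere, and lets `ε → 0`.
-/

/-- Scalar Laplacian of a function `ℝⁿ → ℝ`. -/
noncomputable def scalarLaplacian {n : ℕ}
    (V : EuclideanSpace ℝ (Fin n) → ℝ) (x : EuclideanSpace ℝ (Fin n)) : ℝ :=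
  ∑ i : Fin n, fderiv ℝ (fun y => fderiv ℝ V y (EuclideanSpace.single i 1)) x
    (EuclideanSpace.single i 1)

open Filter Topology

theorem IsLocalMax.deriv_deriv_nonpos {f : ℝ → ℝ} {x : ℝ} (h : IsLocalMax f x)
    (hc : ContinuousAt f x) : deriv (deriv f) x ≤ 0 := by
  -- `f'' x > 0` would make `x` a local minimum too, so `f` would be locally constant.
  by_contra! hpos
  have hconst : f =ᶠ[𝓝 x] fun _ => f x :=
    (h.and (isLocalMin_of_deriv_deriv_pos hpos h.deriv_eq_zero hc)).mono
      fun y hy => le_antisymm hy.1 hy.2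
  have : deriv (deriv f) x = 0 := by
    rw [hconst.deriv.deriv_eq]; simp
  exact hpos.ne' this

section SecondDirDeriv

variable {E : Type*} [NormedAddCommGroup E] [NormedSpace ℝ E] {f g : E → ℝ}

noncomputable def secondDirDeriv (f : E → ℝ) (x e : E) : ℝ :=
  fderiv ℝ (fun y => fderiv ℝ f y e) x e

theorem ContDiff.differentiable_fderiv_apply (hf : ContDiff ℝ 2 f) (e : E) :
    Differentiable ℝ (fun y => fderiv ℝ f y e) :=
  ((hf.fderiv_right (m := 1) le_rfl).clm_apply contDiff_const).differentiable one_ne_zero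

theorem secondDirDeriv_add (hf : ContDiff ℝ 2 f) (hg : ContDiff ℝ 2 g) (x e : E) :
    secondDirDeriv (fun y => f y + g y) x e = secondDirDeriv f x e + secondDirDeriv g x e := by
  have hfg : (fun y => fderiv ℝ (fun z => f z + g z) y e)
      = fun y => fderiv ℝ f y e + fderiv ℝ g y e := by
    funext y
    rw [fderiv_fun_add (hf.differentiable two_ne_zero y) (hg.differentiable two_ne_zero y)]
    rfl
  rw [secondDirDeriv, hfg, fderiv_fun_add (hf.differentiable_fderiv_apply e x)
    (hg.differentiable_fderiv_apply e x)]
  rfl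

theorem secondDirDeriv_sub (hf : ContDiff ℝ 2 f) (hg : ContDiff ℝ 2 g) (x e : E) :
    secondDirDeriv (fun y => f y - g y) x e = secondDirDeriv f x e - secondDirDeriv g x e := by
  have hfg : (fun y => fderiv ℝ (fun z => f z - g z) y e)
      = fun y => fderiv ℝ f y e - fderiv ℝ g y e := by
    funext y
    rw [fderiv_fun_sub (hf.differentiable two_ne_zero y) (hg.differentiable two_ne_zero y)]
    rfl
  rw [secondDirDeriv, hfg, fderiv_fun_sub (hf.differentiable_fderiv_apply e x)
    (hg.differentiable_fderiv_apply e x)]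
  rfl

theorem secondDirDeriv_const_mul (c : ℝ) (hf : ContDiff ℝ 2 f) (x e : E) :
    secondDirDeriv (fun y => c * f y) x e = c * secondDirDeriv f x e := by
  have hcf : (fun y => fderiv ℝ (fun z => c * f z) y e) = fun y => c * fderiv ℝ f y e := by
    funext y
    rw [fderiv_const_mul (hf.differentiable two_ne_zero y)]
    rfl
  rw [secondDirDeriv, hcf, fderiv_const_mul (hf.differentiable_fderiv_apply e x)]
  rfl

theorem secondDirDeriv_sq (hf : ContDiff ℝ 2 f) (x e : E) :
    secondDirDeriv (fun y => f y ^ 2) x e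
      = 2 * fderiv ℝ f x e ^ 2 + 2 * f x * secondDirDeriv f x e := by
  have hf1 := hf.differentiable two_ne_zero
  have hsq : (fun y => fderiv ℝ (fun z => f z ^ 2) y e) = fun y => 2 * f y * fderiv ℝ f y e := by
    funext y
    rw [fderiv_fun_pow 2 (hf1 y)]
    simp
  rw [secondDirDeriv, hsq, fderiv_fun_mul ((hf1 x).const_mul 2)
    (hf.differentiable_fderiv_apply e x), fderiv_const_mul (hf1 x)]
  simp only [add_apply, FunLike.coe_smul, Pi.smul_apply, smul_eq_mul]
  rw [secondDirDeriv]
  ring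

theorem IsLocalMax.secondDirDeriv_nonpos {x : E} (hf : ContDiff ℝ 2 f) (h : IsLocalMax f x)
    (e : E) : secondDirDeriv f x e ≤ 0 := by
  set L : ℝ → E := fun t => x + t • e
  have hL : ∀ t, HasDerivAt L e t := fun t => by
    simpa [L] using ((hasDerivAt_id t).smul_const e).const_add x
  have hL0 : L 0 = x := by simp [L]
  have hderiv : deriv (f ∘ L) = fun t => fderiv ℝ f (L t) e := funext fun t =>
    ((hf.differentiable two_ne_zero (L t)).hasFDerivAt.comp_hasDerivAt t (hL t)).deriv
  have hderiv2 : deriv (deriv (f ∘ L)) 0 = secondDirDeriv f x e := by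
    rw [hderiv, ← hL0]
    exact ((hf.differentiable_fderiv_apply e (L 0)).hasFDerivAt.comp_hasDerivAt 0 (hL 0)).deriv
  rw [← hderiv2]
  refine IsLocalMax.deriv_deriv_nonpos ?_ (hf.continuous.comp (by fun_prop)).continuousAt
  exact (hL0 ▸ h).comp_continuous (by fun_prop)

end SecondDirDeriv

theorem secondDirDeriv_norm_sq {F : Type*} [NormedAddCommGroup F] [InnerProductSpace ℝ F]
    (x e : F) : secondDirDeriv (fun y : F => ‖y‖ ^ 2) x e = 2 * ‖e‖ ^ 2 := by
  have h : (fun y => fderiv ℝ (fun z : F => ‖z‖ ^ 2) y e) = ⇑((2 : ℝ) • innerSL ℝ e) := by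
    funext y; simp [fderiv_norm_sq_apply, real_inner_comm]
  rw [secondDirDeriv, h, ContinuousLinearMap.fderiv]
  simp

theorem IsLocalMax.mul_secondDirDeriv_add_mul_le {F : Type*} [NormedAddCommGroup F]
    [InnerProductSpace ℝ F] {u₁ u₂ : F → ℝ} (hu₁ : ContDiff ℝ 2 u₁) (hu₂ : ContDiff ℝ 2 u₂)
    {c₁ c₂ ε : ℝ} (hc₁ : 0 ≤ c₁) (hc₂ : 0 ≤ c₂) {x₀ : F}
    (hmax : IsLocalMax (fun y => c₁ * u₁ y ^ 2 + c₂ * u₂ y ^ 2 - ε * ‖y‖ ^ 2) x₀) (e : F) :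
    c₁ * u₁ x₀ * secondDirDeriv u₁ x₀ e + c₂ * u₂ x₀ * secondDirDeriv u₂ x₀ e ≤ ε * ‖e‖ ^ 2 := by
  have hsq₁ : ContDiff ℝ 2 fun y => c₁ * u₁ y ^ 2 := contDiff_const.mul (hu₁.pow 2)
  have hsq₂ : ContDiff ℝ 2 fun y => c₂ * u₂ y ^ 2 := contDiff_const.mul (hu₂.pow 2)
  have hnorm : ContDiff ℝ 2 fun y : F => ‖y‖ ^ 2 := contDiff_norm_sq ℝ
  have h := hmax.secondDirDeriv_nonpos ((hsq₁.add hsq₂).sub (contDiff_const.mul hnorm)) e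
  rw [secondDirDeriv_sub (hsq₁.add hsq₂) (contDiff_const.mul hnorm), secondDirDeriv_add hsq₁ hsq₂,
    secondDirDeriv_const_mul _ (hu₁.pow 2), secondDirDeriv_const_mul _ (hu₂.pow 2),
    secondDirDeriv_const_mul _ hnorm, secondDirDeriv_sq hu₁, secondDirDeriv_sq hu₂,
    secondDirDeriv_norm_sq] at h
  linarith [mul_nonneg hc₁ (sq_nonneg (fderiv ℝ u₁ x₀ e)),
    mul_nonneg hc₂ (sq_nonneg (fderiv ℝ u₂ x₀ e))]

theorem scalarLaplacian_eq_sum_secondDirDeriv {n : ℕ} (V : EuclideanSpace ℝ (Fin n) → ℝ)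
    (x : EuclideanSpace ℝ (Fin n)) :
    scalarLaplacian V x = ∑ i, secondDirDeriv V x (EuclideanSpace.single i 1) :=
  rfl

theorem IsLocalMax.mul_scalarLaplacian_add_mul_le {n : ℕ} {u₁ u₂ : EuclideanSpace ℝ (Fin n) → ℝ}
    (hu₁ : ContDiff ℝ 2 u₁) (hu₂ : ContDiff ℝ 2 u₂) {c₁ c₂ ε : ℝ} (hc₁ : 0 ≤ c₁) (hc₂ : 0 ≤ c₂)
    {x₀ : EuclideanSpace ℝ (Fin n)}
    (hmax : IsLocalMax (fun y => c₁ * u₁ y ^ 2 + c₂ * u₂ y ^ 2 - ε * ‖y‖ ^ 2) x₀) :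
    c₁ * u₁ x₀ * scalarLaplacian u₁ x₀ + c₂ * u₂ x₀ * scalarLaplacian u₂ x₀ ≤ n * ε := by
  simp only [scalarLaplacian_eq_sum_secondDirDeriv, Finset.mul_sum, ← Finset.sum_add_distrib]
  calc _ ≤ ∑ _i : Fin n, ε := Finset.sum_le_sum fun i _ => by
        simpa using hmax.mul_secondDirDeriv_add_mul_le hu₁ hu₂ hc₁ hc₂ (EuclideanSpace.single i 1)
    _ = n * ε := by simp

theorem exists_forall_sub_mul_norm_sq_le {E : Type*} [NormedAddCommGroup E] [ProperSpace E]
    {w : E → ℝ} (hw : Continuous w) {M : ℝ} (hM : ∀ y, w y ≤ M) {ε : ℝ} (hε : 0 < ε) :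
    ∃ x₀, ∀ y, w y - ε * ‖y‖ ^ 2 ≤ w x₀ - ε * ‖x₀‖ ^ 2 := by
  refine (hw.sub (continuous_const.mul (continuous_norm.pow 2))).exists_forall_ge ?_
  have hpen : Tendsto (fun y : E => ε * ‖y‖ ^ 2) (cocompact E) atTop :=
    ((tendsto_pow_atTop two_ne_zero).comp tendsto_norm_cocompact_atTop).const_mul_atTop hε
  exact tendsto_atBot_mono (fun y => sub_le_sub_right (hM y) _)
    (tendsto_atBot_add_const_left _ M (tendsto_neg_atTop_atBot.comp hpen))

theorem le_of_forall_pos_le_add_mul {a b K : ℝ} (h : ∀ ε > 0, a ≤ b + ε * K) : a ≤ b := by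
  have hlim : Tendsto (fun ε => b + ε * K) (𝓝[>] 0) (𝓝 b) := by
    have : Tendsto (fun ε => b + ε * K) (𝓝 0) (𝓝 (b + 0 * K)) :=
      (continuous_const.add (continuous_id.mul continuous_const)).tendsto 0
    simpa using this.mono_left nhdsWithin_le_nhds
  exact ge_of_tendsto hlim (eventually_nhdsWithin_of_forall h)

theorem add_le_one_add_div_min_of_mul_sub_one_le {s₁ s₂ p q δ : ℝ} (hs₁ : 0 < s₁) (hs₂ : 0 < s₂)
    (hp : 0 ≤ p) (hq : 0 ≤ q) (hδ : 0 ≤ δ) (h : (s₁ * p + s₂ * q) * (p + q - 1) ≤ δ) :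
    p + q ≤ 1 + δ / min s₁ s₂ := by
  have hm : 0 < min s₁ s₂ := lt_min hs₁ hs₂
  rcases le_or_gt (p + q) 1 with hle | hgt
  · linarith [div_nonneg hδ hm.le]
  have hmin : min s₁ s₂ ≤ s₁ * p + s₂ * q := by
    nlinarith [min_le_left s₁ s₂, min_le_right s₁ s₂]
  have : min s₁ s₂ * (p + q - 1) ≤ δ := by nlinarith
  rw [← sub_le_iff_le_add', le_div_iff₀ hm]
  linarith

theorem sq_sqrt_div_rpow_one_fourth {μ g : ℝ} (hμ : 0 ≤ μ) (hg : 0 ≤ g) :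
    (√μ / g ^ ((1 : ℝ) / 4)) ^ 2 = μ / √g := by
  rw [div_pow, Real.sq_sqrt hμ, ← Real.rpow_natCast, ← Real.rpow_mul hg, Real.sqrt_eq_rpow]
  norm_num

theorem inv_mul_sq_add_inv_mul_sq_le {g11 g22 g12 μ a b A B δ : ℝ} (hg11 : 0 < g11)
    (hg22 : 0 < g22) (hμ : 0 < μ) (hseg : √(g11 * g22) ≤ g12) (ha : a ^ 2 = μ / √g11)
    (hb : b ^ 2 = μ / √g22) (hδ : 0 ≤ δ)
    (h : (a ^ 2)⁻¹ * A * (g11 * (A ^ 2 - a ^ 2) * A + g12 * A * B ^ 2)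
      + (b ^ 2)⁻¹ * B * (g22 * (B ^ 2 - b ^ 2) * B + g12 * A ^ 2 * B) ≤ δ) :
    (a ^ 2)⁻¹ * A ^ 2 + (b ^ 2)⁻¹ * B ^ 2 ≤ 1 + δ / μ / min √g11 √g22 := by
  set s₁ := √g11
  set s₂ := √g22
  have hs₁ : 0 < s₁ := Real.sqrt_pos.mpr hg11
  have hs₂ : 0 < s₂ := Real.sqrt_pos.mpr hg22
  have hg11 : g11 = s₁ ^ 2 := (Real.sq_sqrt hg11.le).symm
  have hg22 : g22 = s₂ ^ 2 := (Real.sq_sqrt hg22.le).symm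
  have hseg : s₁ * s₂ ≤ g12 := by rwa [← Real.sqrt_mul (by positivity)]
  set p := (a ^ 2)⁻¹ * A ^ 2
  set q := (b ^ 2)⁻¹ * B ^ 2
  have hreact : (a ^ 2)⁻¹ * A * (g11 * (A ^ 2 - a ^ 2) * A + g12 * A * B ^ 2)
      + (b ^ 2)⁻¹ * B * (g22 * (B ^ 2 - b ^ 2) * B + g12 * A ^ 2 * B)
      = μ * (s₁ * p * (p - 1) + s₂ * q * (q - 1) + g12 * (1 / s₁ + 1 / s₂) * p * q) := by
    simp only [p, q, ha, hb, hg11, hg22]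
    field_simp
    ring
  -- the segregation condition `g12 ≥ s₁ s₂` bounds the cross term `g12 (1/s₁ + 1/s₂) p q`
  -- from below by `(s₁ + s₂) p q`, which completes `(s₁ p + s₂ q) (p + q - 1)`
  have hcross : s₁ + s₂ ≤ g12 * (1 / s₁ + 1 / s₂) := by
    rw [show g12 * (1 / s₁ + 1 / s₂) = g12 / (s₁ * s₂) * (s₁ + s₂) by field_simp; ring]
    exact le_mul_of_one_le_left (by positivity) ((one_le_div (by positivity)).mpr hseg)
  have hp : 0 ≤ p := by positivity
  have hq : 0 ≤ q := by positivity
  refine add_le_one_add_div_min_of_mul_sub_one_le hs₁ hs₂ hp hq (by positivity) ?_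
  rw [le_div_iff₀ hμ]
  nlinarith [mul_le_mul_of_nonneg_left hcross (mul_nonneg hp hq)]

theorem gross_pitaevskii_ellipse_bound_general {n : ℕ}
    (g11 g22 g12 μ : ℝ) (hg11 : 0 < g11) (hg22 : 0 < g22) (hμ : 0 < μ)
    (hseg : g12 > Real.sqrt (g11 * g22))
    (a b : ℝ) (ha : a = Real.sqrt μ / g11 ^ ((1:ℝ)/4)) (hb : b = Real.sqrt μ / g22 ^ ((1:ℝ)/4))
    (u₁ u₂ : EuclideanSpace ℝ (Fin n) → ℝ)
    (hu₁ : ContDiff ℝ 2 u₁) (hu₂ : ContDiff ℝ 2 u₂)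
    (hbdd : ∃ C : ℝ, ∀ x, |u₁ x| ≤ C ∧ |u₂ x| ≤ C)
    (hsol₁ : ∀ x, scalarLaplacian u₁ x = g11 * (u₁ x ^ 2 - a ^ 2) * u₁ x + g12 * u₁ x * u₂ x ^ 2)
    (hsol₂ : ∀ x, scalarLaplacian u₂ x = g22 * (u₂ x ^ 2 - b ^ 2) * u₂ x + g12 * u₁ x ^ 2 * u₂ x) :
    ∀ x, u₁ x ^ 2 / a ^ 2 + u₂ x ^ 2 / b ^ 2 ≤ 1 := by
  intro x
  obtain ⟨C, hC⟩ := hbdd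
  have ha2 : a ^ 2 = μ / √g11 := ha ▸ sq_sqrt_div_rpow_one_fourth hμ.le hg11.le
  have hb2 : b ^ 2 = μ / √g22 := hb ▸ sq_sqrt_div_rpow_one_fourth hμ.le hg22.le
  set W := fun y => (a ^ 2)⁻¹ * u₁ y ^ 2 + (b ^ 2)⁻¹ * u₂ y ^ 2
  have hW : ∀ y, W y ≤ (a ^ 2)⁻¹ * C ^ 2 + (b ^ 2)⁻¹ * C ^ 2 := fun y => by
    have h₁ := sq_le_sq' (abs_le.mp (hC y).1).1 (abs_le.mp (hC y).1).2
    have h₂ := sq_le_sq' (abs_le.mp (hC y).2).1 (abs_le.mp (hC y).2).2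
    simp only [W]; gcongr
  simp only [div_eq_inv_mul]
  refine le_of_forall_pos_le_add_mul (K := n / μ / min √g11 √g22 + ‖x‖ ^ 2) fun ε hε => ?_
  obtain ⟨x₀, hx₀⟩ := exists_forall_sub_mul_norm_sq_le (by fun_prop) hW hε
  have hmax : IsLocalMax (fun y => W y - ε * ‖y‖ ^ 2) x₀ := Eventually.of_forall hx₀
  have hlap := hmax.mul_scalarLaplacian_add_mul_le hu₁ hu₂ (by positivity) (by positivity)
  rw [hsol₁, hsol₂] at hlap
  have hx₀W := inv_mul_sq_add_inv_mul_sq_le hg11 hg22 hμ hseg.le ha2 hb2 (by positivity) hlap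
  have hpen : 0 ≤ ε * ‖x₀‖ ^ 2 := by positivity
  change W x ≤ _
  linarith [hx₀ x, show (n : ℝ) * ε / μ / min √g11 √g22 = ε * (n / μ / min √g11 √g22) by ring]

theorem gross_pitaevskii_ellipse_bound {n : ℕ}
    (g11 g22 g12 μ : ℝ) (hg11 : 0 < g11) (hg22 : 0 < g22) (hg12 : 0 < g12) (hμ : 0 < μ)
    (hseg : g12 > Real.sqrt (g11 * g22))
    (a b : ℝ) (ha : a = Real.sqrt μ / g11 ^ ((1:ℝ)/4)) (hb : b = Real.sqrt μ / g22 ^ ((1:ℝ)/4))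
    (u₁ u₂ : EuclideanSpace ℝ (Fin n) → ℝ)
    (hu₁ : ContDiff ℝ 2 u₁) (hu₂ : ContDiff ℝ 2 u₂)
    (hbdd : ∃ C : ℝ, ∀ x, |u₁ x| ≤ C ∧ |u₂ x| ≤ C)
    (hsol₁ : ∀ x, scalarLaplacian u₁ x = g11 * (u₁ x ^ 2 - a ^ 2) * u₁ x + g12 * u₁ x * u₂ x ^ 2)
    (hsol₂ : ∀ x, scalarLaplacian u₂ x = g22 * (u₂ x ^ 2 - b ^ 2) * u₂ x + g12 * u₁ x ^ 2 * u₂ x) :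
    ∀ x, u₁ x ^ 2 / a ^ 2 + u₂ x ^ 2 / b ^ 2 ≤ 1 :=
  gross_pitaevskii_ellipse_bound_general g11 g22 g12 μ hg11 hg22 hμ hseg a b ha hb u₁ u₂ hu₁ hu₂
    hbdd hsol₁ hsol₂
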